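/- arXiv:1901.01840 — 2 statements merged into one kernel-verified Lean document; each statement's English description precedes it below -/
import Mathlib

section
/- Let p and q be real numbers with p > 0, q > 0 and p ≠ q, let n be a positive integer, let u be a natural number, and let v be a real number such that v + i ≠ 0 for 1 ≤ i ≤ n + u and u + v + i ≠ 0 for 1 ≤ i ≤ n. Then the negative (p,q)-deformed Vandermonde formula holds: 1/Π_{i=1}^{n}[u+v+i]_{p,q} = Σ_{κ=0}^{u} C_{p,q}(−n,κ) · p^{κ(v+n+κ)} · q^{−(n+κ)(u−κ)} · [u]_{κ,p,q} / Π_{i=1}^{n+κ}[v+i]_{p,q}. (The sum may be extended over all κ ∈ ℕ, since [u]_{κ,p,q} = 0 for κ > u.) -/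
/-- The (p,q)-deformed number `[x]_{p,q} = (p^x - q^x)/(p - q)` (real powers). -/
noncomputable def pqNum (p q x : ℝ) : ℝ := (p ^ x - q ^ x) / (p - q)

/-- The (p,q)-factorial `[n]_{p,q}! = ∏_{i=1}^n [i]_{p,q}`. -/
noncomputable def pqFac (p q : ℝ) (n : ℕ) : ℝ := ∏ i ∈ Finset.range n, pqNum p q ((i : ℝ) + 1)

/-- The κ-th order (p,q)-factorial `[x]_{κ,p,q} = ∏_{v=0}^{κ-1} [x-v]_{p,q}`. -/
noncomputable def pqFacOrd (p q x : ℝ) (j : ℕ) : ℝ := ∏ v ∈ Finset.range j, pqNum p q (x - (v : ℝ))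

/-- The (p,q)-binomial coefficient with real upper argument: `C_{p,q}(x,κ) = [x]_{κ,p,q}/[κ]_{p,q}!`. -/
noncomputable def pqBinomR (p q x : ℝ) (k : ℕ) : ℝ := pqFacOrd p q x k / pqFac p q k

/-! The left-hand side depends on `u` and `v` only through `u + v`, so by induction on `u` it
suffices that the right-hand sum is unchanged when `(u, v + 1)` is replaced by `(u + 1, v)`; for
`u = 0` the sum is the single term `1 / ([v+1] ⋯ [v+n])`. Splitting `[v+n+k+1] = p^(v+1) [n+k] +
q^(n+k) [v+1]` in the denominator writes the `k`-th term of the first sum as `A k + B k`, and the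
Pascal rule `[u+1] = p^(k+1) [u-k] + q^(u-k) [k+1]` writes the `(k+1)`-th term of the second as
`A (k+1) + B k` (here `A = vandermondeFst`, `B = vandermondeSnd`); since `A (u+1) = 0`, the two
sums agree. -/

open Finset

lemma sum_range_succ_eq_of_split {M : Type*} [AddCommMonoid M] {f g a b : ℕ → M} {u : ℕ}
    (hf : ∀ k ∈ range (u + 1), f k = a k + b k) (hg₀ : g 0 = a 0)
    (hg : ∀ k ∈ range (u + 1), g (k + 1) = a (k + 1) + b k) (ha : a (u + 1) = 0) :
    ∑ k ∈ range (u + 1), f k = ∑ k ∈ range (u + 2), g k := by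
  rw [sum_congr rfl hf, sum_add_distrib, sum_range_succ' g, sum_congr rfl hg, sum_add_distrib,
    hg₀, add_right_comm, ← sum_range_succ' a, sum_range_succ a (u + 1), ha, add_zero]

noncomputable def pqRising (p q x : ℝ) (m : ℕ) : ℝ :=
  ∏ i ∈ range m, pqNum p q (x + ((i : ℝ) + 1))

section

variable {p q : ℝ}

lemma pqNum_add (hp : 0 < p) (hq : 0 < q) (a b : ℝ) :
    pqNum p q (a + b) = p ^ b * pqNum p q a + q ^ a * pqNum p q b := by
  simp only [pqNum, Real.rpow_add hp, Real.rpow_add hq]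
  ring

lemma pqNum_neg (hp : 0 < p) (hq : 0 < q) (x : ℝ) :
    pqNum p q (-x) = -(p ^ (-x) * q ^ (-x) * pqNum p q x) := by
  have hpx : p ^ x ≠ 0 := (Real.rpow_pos_of_pos hp x).ne'
  have hqx : q ^ x ≠ 0 := (Real.rpow_pos_of_pos hq x).ne'
  simp only [pqNum, Real.rpow_neg hp.le, Real.rpow_neg hq.le]
  field_simp
  ring

lemma pqNum_ne_zero (hp : 0 < p) (hq : 0 < q) (hpq : p ≠ q) {x : ℝ} (hx : x ≠ 0) :
    pqNum p q x ≠ 0 := by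
  have hpow : p ^ x ≠ q ^ x := mt (Real.rpow_left_inj hp.le hq.le hx).mp hpq
  exact div_ne_zero (sub_ne_zero.mpr hpow) (sub_ne_zero.mpr hpq)

lemma pqFacOrd_succ (x : ℝ) (k : ℕ) :
    pqFacOrd p q x (k + 1) = pqFacOrd p q x k * pqNum p q (x - k) :=
  prod_range_succ _ _

lemma pqFacOrd_succ' (x : ℝ) (k : ℕ) :
    pqFacOrd p q x (k + 1) = pqNum p q x * pqFacOrd p q (x - 1) k := by
  simp only [pqFacOrd, prod_range_succ', Nat.cast_zero, sub_zero, Nat.cast_succ, sub_add_eq_sub_sub,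
    sub_right_comm x]
  ring

lemma pqFacOrd_add_one_succ (hp : 0 < p) (hq : 0 < q) (x : ℝ) (k : ℕ) :
    pqFacOrd p q (x + 1) (k + 1) =
      p ^ ((k : ℝ) + 1) * pqFacOrd p q x (k + 1)
        + q ^ (x - k) * pqNum p q ((k : ℝ) + 1) * pqFacOrd p q x k := by
  have hsplit : pqNum p q (x + 1) =
      p ^ ((k : ℝ) + 1) * pqNum p q (x - k) + q ^ (x - k) * pqNum p q ((k : ℝ) + 1) := by
    rw [← pqNum_add hp hq]
    ring_nf
  rw [pqFacOrd_succ', add_sub_cancel_right, hsplit, pqFacOrd_succ]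
  ring

lemma pqBinomR_succ_mul (hp : 0 < p) (hq : 0 < q) (hpq : p ≠ q) (x : ℝ) (k : ℕ) :
    pqBinomR p q x (k + 1) * pqNum p q ((k : ℝ) + 1) = pqBinomR p q x k * pqNum p q (x - k) := by
  have hk : pqNum p q ((k : ℝ) + 1) ≠ 0 := pqNum_ne_zero hp hq hpq (by positivity)
  simp only [pqBinomR, pqFacOrd_succ, pqFac, prod_range_succ]
  field_simp

lemma pqRising_succ (x : ℝ) (m : ℕ) :
    pqRising p q x (m + 1) = pqRising p q x m * pqNum p q (x + ((m : ℝ) + 1)) :=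
  prod_range_succ _ _

lemma pqRising_succ' (x : ℝ) (m : ℕ) :
    pqRising p q x (m + 1) = pqNum p q (x + 1) * pqRising p q (x + 1) m := by
  rw [pqRising, prod_range_succ', mul_comm]
  congr 1
  · simp
  · refine prod_congr rfl fun i _ => ?_
    push_cast
    ring_nf

lemma pqRising_ne_zero_of_le {x : ℝ} {k m : ℕ} (h : pqRising p q x m ≠ 0) (hkm : k ≤ m) :
    pqRising p q x k ≠ 0 :=
  prod_ne_zero_iff.mpr fun i hi => prod_ne_zero_iff.mp h i (range_subset_range.mpr hkm hi)

lemma pqRising_ne_zero (hp : 0 < p) (hq : 0 < q) (hpq : p ≠ q) {x : ℝ} {m : ℕ}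
    (hx : ∀ i : ℕ, 1 ≤ i → i ≤ m → x + (i : ℝ) ≠ 0) : pqRising p q x m ≠ 0 :=
  prod_ne_zero_iff.mpr fun i hi => pqNum_ne_zero hp hq hpq <| by
    exact_mod_cast hx (i + 1) (by omega) (mem_range.mp hi)

lemma inv_pqRising_add_one (hp : 0 < p) (hq : 0 < q) {x : ℝ} {m : ℕ}
    (h : pqRising p q x (m + 1) ≠ 0) :
    (pqRising p q (x + 1) m)⁻¹ =
      q ^ (-(m : ℝ)) *
        ((pqRising p q x m)⁻¹ - p ^ (x + 1) * pqNum p q m / pqRising p q x (m + 1)) := by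
  have hlast : pqNum p q (x + ((m : ℝ) + 1)) =
      p ^ (x + 1) * pqNum p q m + q ^ (m : ℝ) * pqNum p q (x + 1) := by
    rw [← pqNum_add hp hq]
    ring_nf
  have hqm : q ^ (-(m : ℝ)) * q ^ (m : ℝ) = 1 := by
    rw [← Real.rpow_add hq, neg_add_cancel, Real.rpow_zero]
  have hshift := pqRising_succ' (p := p) (q := q) x m
  rw [pqRising_succ] at h hshift ⊢
  have hD := left_ne_zero_of_mul h
  have hN := right_ne_zero_of_mul h
  have hD' : pqRising p q (x + 1) m ≠ 0 := right_ne_zero_of_mul (hshift ▸ h)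
  field_simp
  linear_combination hshift - pqRising p q (x + 1) m * q ^ (-(m : ℝ)) * hlast
    - pqNum p q (x + 1) * pqRising p q (x + 1) m * hqm

end

noncomputable def vandermondeTerm (p q : ℝ) (n u : ℕ) (v : ℝ) (k : ℕ) : ℝ :=
  pqBinomR p q (-(n : ℝ)) k * p ^ ((k : ℝ) * (v + (n : ℝ) + (k : ℝ)))
    * q ^ (-(((n : ℝ) + (k : ℝ)) * ((u : ℝ) - (k : ℝ))))
    * pqFacOrd p q (u : ℝ) k
    / pqRising p q v (n + k)

noncomputable def vandermondeFst (p q : ℝ) (n u : ℕ) (v : ℝ) (k : ℕ) : ℝ :=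
  pqBinomR p q (-(n : ℝ)) k * p ^ ((k : ℝ) * (v + 1 + (n : ℝ) + (k : ℝ)))
    * q ^ (-(((n : ℝ) + (k : ℝ)) * ((u : ℝ) + 1 - (k : ℝ))))
    * pqFacOrd p q (u : ℝ) k
    / pqRising p q v (n + k)

noncomputable def vandermondeSnd (p q : ℝ) (n u : ℕ) (v : ℝ) (k : ℕ) : ℝ :=
  -(pqBinomR p q (-(n : ℝ)) k * p ^ ((k : ℝ) * (v + 1 + (n : ℝ) + (k : ℝ)) + (v + 1))
    * q ^ (-(((n : ℝ) + (k : ℝ)) * ((u : ℝ) + 1 - (k : ℝ))))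
    * pqNum p q ((n : ℝ) + (k : ℝ)) * pqFacOrd p q (u : ℝ) k
    / pqRising p q v (n + k + 1))

section

variable {p q : ℝ}

lemma vandermondeTerm_add_one (hp : 0 < p) (hq : 0 < q) (n u : ℕ) (v : ℝ) (k : ℕ)
    (hv : pqRising p q v (n + k + 1) ≠ 0) :
    vandermondeTerm p q n u (v + 1) k =
      vandermondeFst p q n u v k + vandermondeSnd p q n u v k := by
  have hq' : q ^ (-(((n : ℝ) + (k : ℝ)) * ((u : ℝ) + 1 - (k : ℝ)))) =
      q ^ (-(((n : ℝ) + (k : ℝ)) * ((u : ℝ) - (k : ℝ))))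
        * q ^ (-((n + k : ℕ) : ℝ)) := by
    rw [← Real.rpow_add hq]
    push_cast
    ring_nf
  rw [vandermondeTerm, div_eq_mul_inv, inv_pqRising_add_one hp hq hv, vandermondeFst,
    vandermondeSnd, Real.rpow_add hp ((k : ℝ) * (v + 1 + n + k)) (v + 1), hq']
  push_cast
  ring

lemma vandermondeTerm_succ_zero (n u : ℕ) (v : ℝ) :
    vandermondeTerm p q n (u + 1) v 0 = vandermondeFst p q n u v 0 := by
  simp [vandermondeTerm, vandermondeFst, pqFacOrd]

lemma vandermondeTerm_succ_succ (hp : 0 < p) (hq : 0 < q) (hpq : p ≠ q) (n u : ℕ) (v : ℝ)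
    (k : ℕ) :
    vandermondeTerm p q n (u + 1) v (k + 1) =
      vandermondeFst p q n u v (k + 1) + vandermondeSnd p q n u v k := by
  have hbinom : pqBinomR p q (-(n : ℝ)) (k + 1) * pqNum p q ((k : ℝ) + 1) =
      -(p ^ (-((n : ℝ) + k)) * q ^ (-((n : ℝ) + k)) * pqNum p q ((n : ℝ) + k)
        * pqBinomR p q (-(n : ℝ)) k) := by
    rw [pqBinomR_succ_mul hp hq hpq, show -(n : ℝ) - k = -((n : ℝ) + k) by ring,
      pqNum_neg hp hq]
    ring
  have hp₁ : p ^ (((k : ℝ) + 1) * (v + n + ((k : ℝ) + 1))) * p ^ ((k : ℝ) + 1) =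
      p ^ (((k : ℝ) + 1) * (v + 1 + n + ((k : ℝ) + 1))) := by
    rw [← Real.rpow_add hp]
    ring_nf
  have hp₂ : p ^ (-((n : ℝ) + k)) * p ^ (((k : ℝ) + 1) * (v + n + ((k : ℝ) + 1))) =
      p ^ ((k : ℝ) * (v + 1 + n + k) + (v + 1)) := by
    rw [← Real.rpow_add hp]
    ring_nf
  have hq₂ : q ^ (-((n : ℝ) + k))
      * q ^ (-(((n : ℝ) + ((k : ℝ) + 1)) * ((u : ℝ) + 1 - ((k : ℝ) + 1))))
      * q ^ ((u : ℝ) - k) = q ^ (-(((n : ℝ) + k) * ((u : ℝ) + 1 - k))) := by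
    rw [← Real.rpow_add hq, ← Real.rpow_add hq]
    ring_nf
  simp only [vandermondeTerm, vandermondeFst, vandermondeSnd]
  push_cast
  rw [pqFacOrd_add_one_succ hp hq, ← hp₁, ← hp₂, ← hq₂, ← add_assoc n k 1]
  linear_combination p ^ (((k : ℝ) + 1) * (v + n + ((k : ℝ) + 1)))
    * q ^ (-(((n : ℝ) + ((k : ℝ) + 1)) * ((u : ℝ) + 1 - ((k : ℝ) + 1))))
    * q ^ ((u : ℝ) - k) * pqFacOrd p q u k / pqRising p q v (n + k + 1) * hbinom

lemma vandermondeFst_eq_zero (n u : ℕ) (v : ℝ) : vandermondeFst p q n u v (u + 1) = 0 := by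
  have hfac : pqFacOrd p q (u : ℝ) (u + 1) = 0 := by
    rw [pqFacOrd_succ, sub_self, pqNum, Real.rpow_zero, Real.rpow_zero, sub_self, zero_div,
      mul_zero]
  rw [vandermondeFst, hfac, mul_zero, zero_div]

lemma sum_vandermondeTerm_add_one (hp : 0 < p) (hq : 0 < q) (hpq : p ≠ q) (n u : ℕ) (v : ℝ)
    (hv : pqRising p q v (n + u + 1) ≠ 0) :
    ∑ k ∈ range (u + 1), vandermondeTerm p q n u (v + 1) k =
      ∑ k ∈ range (u + 2), vandermondeTerm p q n (u + 1) v k :=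
  sum_range_succ_eq_of_split
    (fun k hk => vandermondeTerm_add_one hp hq n u v k
      (pqRising_ne_zero_of_le hv (by have := mem_range.mp hk; omega)))
    (vandermondeTerm_succ_zero n u v) (fun k _ => vandermondeTerm_succ_succ hp hq hpq n u v k)
    (vandermondeFst_eq_zero n u v)

theorem inv_pqRising_eq_sum_vandermondeTerm (hp : 0 < p) (hq : 0 < q) (hpq : p ≠ q)
    (n u : ℕ) (v : ℝ) (hv : pqRising p q v (n + u) ≠ 0) :
    (pqRising p q ((u : ℝ) + v) n)⁻¹ =
      ∑ k ∈ range (u + 1), vandermondeTerm p q n u v k := by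
  induction u generalizing v with
  | zero => simp [vandermondeTerm, pqBinomR, pqFacOrd, pqFac]
  | succ u ih =>
    have hv' : pqRising p q (v + 1) (n + u) ≠ 0 := by
      rw [← add_assoc, pqRising_succ'] at hv
      exact right_ne_zero_of_mul hv
    rw [← sum_vandermondeTerm_add_one hp hq hpq n u v hv, ← ih (v + 1) hv']
    push_cast
    ring_nf

end

theorem pq_negative_vandermonde_general (p q : ℝ) (hp : 0 < p) (hq : 0 < q) (hpq : p ≠ q)
    (n : ℕ) (u : ℕ) (v : ℝ)
    (hv : ∀ i : ℕ, 1 ≤ i → i ≤ n + u → v + (i : ℝ) ≠ 0) :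
    1 / ∏ i ∈ Finset.range n, pqNum p q ((u : ℝ) + v + ((i : ℝ) + 1)) =
      ∑ κ ∈ Finset.range (u + 1),
        pqBinomR p q (-(n : ℝ)) κ * p ^ ((κ : ℝ) * (v + (n : ℝ) + (κ : ℝ)))
          * q ^ (-(((n : ℝ) + (κ : ℝ)) * ((u : ℝ) - (κ : ℝ))))
          * pqFacOrd p q (u : ℝ) κ
          / ∏ i ∈ Finset.range (n + κ), pqNum p q (v + ((i : ℝ) + 1)) := by
  rw [one_div]
  exact inv_pqRising_eq_sum_vandermondeTerm hp hq hpq n u v (pqRising_ne_zero hp hq hpq hv)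

/-- The negative (p,q)-deformed Vandermonde formula. -/
theorem pq_negative_vandermonde (p q : ℝ) (hp : 0 < p) (hq : 0 < q) (hpq : p ≠ q)
    (n : ℕ) (hn : 0 < n) (u : ℕ) (v : ℝ)
    (hv : ∀ i : ℕ, 1 ≤ i → i ≤ n + u → v + (i : ℝ) ≠ 0)
    (huv : ∀ i : ℕ, 1 ≤ i → i ≤ n → (u : ℝ) + v + (i : ℝ) ≠ 0) :
    1 / ∏ i ∈ Finset.range n, pqNum p q ((u : ℝ) + v + ((i : ℝ) + 1)) =
      ∑ κ ∈ Finset.range (u + 1),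
        pqBinomR p q (-(n : ℝ)) κ * p ^ ((κ : ℝ) * (v + (n : ℝ) + (κ : ℝ)))
          * q ^ (-(((n : ℝ) + (κ : ℝ)) * ((u : ℝ) - (κ : ℝ))))
          * pqFacOrd p q (u : ℝ) κ
          / ∏ i ∈ Finset.range (n + κ), pqNum p q (v + ((i : ℝ) + 1)) :=
  pq_negative_vandermonde_general p q hp hq hpq n u v hv
end

section
/- Let q be a real number with q > 0 and q ≠ 1, let n be a natural number, and let p₀ be a real number. Then the q-deformed variance of the q-binomial distribution satisfies Σ_{κ=0}^{n} ([κ]_q)² · C_q(n,κ) · p₀^κ · Π_{i=1}^{n−κ}(1 − p₀·q^{i−1}) − ([n]_q · p₀)² = [n]_q · p₀ · (1 − p₀). -/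
/-- The q-deformed number `[n]_q = (1 - q^n)/(1 - q)`. -/
noncomputable def qNum (q : ℝ) (n : ℕ) : ℝ := (1 - q ^ n) / (1 - q)

/-- The q-factorial `[n]_q! = ∏_{i=1}^n [i]_q`. -/
noncomputable def qFac (q : ℝ) (n : ℕ) : ℝ := ∏ i ∈ Finset.range n, qNum q (i + 1)

/-- The q-binomial coefficient `C_q(n,κ)`. -/
noncomputable def qBinom (q : ℝ) (n k : ℕ) : ℝ := qFac q n / (qFac q k * qFac q (n - k))

section Aux

variable {q : ℝ}

lemma qNum_zero : qNum q 0 = 0 := by simp [qNum]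

lemma qNum_add (a b : ℕ) : qNum q (a + b) = qNum q a + q ^ a * qNum q b := by
  rcases eq_or_ne q 1 with rfl | hq1
  · simp [qNum]
  · unfold qNum
    have : (1 : ℝ) - q ≠ 0 := sub_ne_zero.mpr (Ne.symm hq1)
    field_simp
    rw [pow_add]
    ring

lemma qFac_zero : qFac q 0 = 1 := by simp [qFac]

lemma qFac_succ (n : ℕ) : qFac q (n + 1) = qFac q n * qNum q (n + 1) :=
  Finset.prod_range_succ _ _

variable (hq : 0 < q) (hq1 : q ≠ 1)
include hq hq1

lemma qpow_ne_one (m : ℕ) (hm : m ≠ 0) : q ^ m ≠ 1 := by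
  rcases lt_or_gt_of_ne hq1 with h | h
  · exact ne_of_lt (pow_lt_one₀ hq.le h hm)
  · exact ne_of_gt (one_lt_pow₀ h hm)

lemma one_sub_q_ne : (1 : ℝ) - q ≠ 0 := sub_ne_zero.mpr (Ne.symm hq1)

lemma qNum_ne_zero (m : ℕ) (hm : m ≠ 0) : qNum q m ≠ 0 :=
  div_ne_zero (sub_ne_zero.mpr (Ne.symm (qpow_ne_one hq hq1 m hm))) (one_sub_q_ne hq hq1)

lemma qNum_one : qNum q 1 = 1 := by
  simp [qNum, div_self (one_sub_q_ne hq hq1)]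

lemma qFac_ne_zero (n : ℕ) : qFac q n ≠ 0 := by
  induction n with
  | zero => simp [qFac]
  | succ m ih =>
    rw [qFac_succ]
    exact mul_ne_zero ih (qNum_ne_zero hq hq1 (m + 1) (Nat.succ_ne_zero m))

lemma qBinom_zero (n : ℕ) : qBinom q n 0 = 1 := by
  unfold qBinom
  rw [qFac_zero, Nat.sub_zero, one_mul, div_self (qFac_ne_zero hq hq1 n)]

lemma qBinom_self (n : ℕ) : qBinom q n n = 1 := by
  unfold qBinom
  rw [Nat.sub_self, qFac_zero, mul_one, div_self (qFac_ne_zero hq hq1 n)]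

/-- Absorption identity: `[k+1] C(k+1+r, k+1) = [k+1+r] C(k+r, k)`. -/
lemma qAbsorb (k r : ℕ) :
    qNum q (k + 1) * qBinom q (k + 1 + r) (k + 1) = qNum q (k + 1 + r) * qBinom q (k + r) k := by
  unfold qBinom
  have h1 : k + 1 + r - (k + 1) = r := by omega
  have h2 : k + r - k = r := by omega
  rw [h1, h2]
  have e1 : qFac q (k + 1 + r) = qFac q (k + r) * qNum q (k + r + 1) := by
    rw [show k + 1 + r = (k + r) + 1 by omega, qFac_succ]
  have e2 : qFac q (k + 1) = qFac q k * qNum q (k + 1) := qFac_succ k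
  have e3 : qNum q (k + 1 + r) = qNum q (k + r + 1) := by rw [show k + 1 + r = k + r + 1 by omega]
  rw [e1, e2, e3]
  have hk := qFac_ne_zero hq hq1 k
  have hr := qFac_ne_zero hq hq1 r
  have hk1 := qNum_ne_zero hq hq1 (k + 1) (Nat.succ_ne_zero _)
  field_simp

/-- q-Pascal identity. -/
lemma qPascal (k r : ℕ) :
    qBinom q (k + r + 2) (k + 1) =
      qBinom q (k + r + 1) (k + 1) + q ^ (r + 1) * qBinom q (k + r + 1) k := by
  unfold qBinom
  have h1 : k + r + 2 - (k + 1) = r + 1 := by omega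
  have h2 : k + r + 1 - (k + 1) = r := by omega
  have h3 : k + r + 1 - k = r + 1 := by omega
  rw [h1, h2, h3]
  have e1 : qFac q (k + r + 2) = qFac q (k + r + 1) * qNum q (k + r + 2) := qFac_succ _
  have e2 : qFac q (k + 1) = qFac q k * qNum q (k + 1) := qFac_succ k
  have e3 : qFac q (r + 1) = qFac q r * qNum q (r + 1) := qFac_succ r
  have e4 : qNum q (k + r + 2) = qNum q (r + 1) + q ^ (r + 1) * qNum q (k + 1) := by
    rw [show k + r + 2 = (r + 1) + (k + 1) by omega, qNum_add]
  rw [e1, e2, e3, e4]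
  have hk := qFac_ne_zero hq hq1 k
  have hr := qFac_ne_zero hq hq1 r
  have hkr := qFac_ne_zero hq hq1 (k + r + 1)
  have hk1 := qNum_ne_zero hq hq1 (k + 1) (Nat.succ_ne_zero _)
  have hr1 := qNum_ne_zero hq hq1 (r + 1) (Nat.succ_ne_zero _)
  field_simp

/-- The total mass of the q-binomial distribution is 1. -/
lemma qSum_one (p : ℝ) (n : ℕ) :
    ∑ κ ∈ Finset.range (n + 1),
        qBinom q n κ * p ^ κ * ∏ i ∈ Finset.range (n - κ), (1 - p * q ^ i) = 1 := by
  induction n with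
  | zero => simp [qBinom_zero hq hq1]
  | succ n ih =>
    set f : ℕ → ℝ := fun κ => qBinom q n κ * p ^ κ * ∏ i ∈ Finset.range (n - κ), (1 - p * q ^ i)
      with hf
    set g : ℕ → ℝ := fun κ =>
      qBinom q (n + 1) κ * p ^ κ * ∏ i ∈ Finset.range (n + 1 - κ), (1 - p * q ^ i) with hg
    set h : ℕ → ℝ := fun j => p * q ^ (n - j) * f j with hh
    have key : ∀ j ∈ Finset.range n, g (j + 1) = f (j + 1) + (h j - h (j + 1)) := by
      intro j hj
      simp only [Finset.mem_range] at hj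
      obtain ⟨r, hr⟩ : ∃ r, n = j + r + 1 := ⟨n - j - 1, by omega⟩
      subst hr
      have h1 : j + r + 1 + 1 - (j + 1) = r + 1 := by omega
      have h2 : j + r + 1 - (j + 1) = r := by omega
      have h3 : j + r + 1 - j = r + 1 := by omega
      simp only [hf, hg, hh, h1, h2, h3]
      rw [show j + r + 1 + 1 = j + r + 2 by omega,
        qPascal hq hq1 j r, Finset.prod_range_succ]
      ring
    calc ∑ κ ∈ Finset.range (n + 1 + 1), g κ
        = (∑ j ∈ Finset.range (n + 1), g (j + 1)) + g 0 := Finset.sum_range_succ' g (n + 1)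
      _ = ((∑ j ∈ Finset.range n, g (j + 1)) + g (n + 1)) + g 0 := by
          rw [Finset.sum_range_succ]
      _ = ((∑ j ∈ Finset.range n, (f (j + 1) + (h j - h (j + 1)))) + g (n + 1)) + g 0 := by
          rw [Finset.sum_congr rfl key]
      _ = (∑ j ∈ Finset.range n, f (j + 1)) + (h 0 - h n) + g (n + 1) + g 0 := by
          rw [Finset.sum_add_distrib, Finset.sum_range_sub' h]
      _ = 1 := by
          have hg0 : g 0 = (∏ i ∈ Finset.range n, (1 - p * q ^ i)) * (1 - p * q ^ n) := by
            simp only [hg, qBinom_zero hq hq1, Nat.sub_zero, pow_zero, one_mul,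
              Finset.prod_range_succ]
          have hgn : g (n + 1) = p ^ (n + 1) := by
            simp only [hg, qBinom_self hq hq1, Nat.sub_self, Finset.prod_range_zero,
              one_mul, mul_one]
          have hh0 : h 0 = p * q ^ n * f 0 := by simp only [hh, Nat.sub_zero]
          have hhn : h n = p * p ^ n := by
            simp only [hh, hf, Nat.sub_self, pow_zero, qBinom_self hq hq1,
              Finset.prod_range_zero, one_mul, mul_one]
          have hf0 : f 0 = ∏ i ∈ Finset.range n, (1 - p * q ^ i) := by
            simp only [hf, qBinom_zero hq hq1, Nat.sub_zero, pow_zero, one_mul, mul_one]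
          have hsum : (∑ j ∈ Finset.range n, f (j + 1)) + f 0 = 1 := by
            rw [← Finset.sum_range_succ' f n]; exact ih
          rw [hg0, hgn, hh0, hhn, ← hf0]
          linear_combination hsum

/-- The q-mean: first q-moment equals `[n] p`. -/
lemma qSum_mean (p : ℝ) (n : ℕ) :
    ∑ κ ∈ Finset.range (n + 1),
        qNum q κ * (qBinom q n κ * p ^ κ * ∏ i ∈ Finset.range (n - κ), (1 - p * q ^ i))
      = qNum q n * p := by
  cases n with
  | zero => simp [qNum_zero]
  | succ n =>
    rw [Finset.sum_range_succ' _ (n + 1)]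
    have key : ∀ j ∈ Finset.range (n + 1),
        qNum q (j + 1) * (qBinom q (n + 1) (j + 1) * p ^ (j + 1)
          * ∏ i ∈ Finset.range (n + 1 - (j + 1)), (1 - p * q ^ i))
        = qNum q (n + 1) * p *
            (qBinom q n j * p ^ j * ∏ i ∈ Finset.range (n - j), (1 - p * q ^ i)) := by
      intro j hj
      simp only [Finset.mem_range] at hj
      obtain ⟨r, hr⟩ : ∃ r, n = j + r := ⟨n - j, by omega⟩
      subst hr
      have h1 : j + r + 1 - (j + 1) = r := by omega
      have h2 : j + r - j = r := by omega
      rw [h1, h2]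
      have habs := qAbsorb hq hq1 j r
      rw [show j + 1 + r = j + r + 1 by omega] at habs
      linear_combination (p ^ (j + 1) * ∏ i ∈ Finset.range r, (1 - p * q ^ i)) * habs
    rw [Finset.sum_congr rfl key, ← Finset.mul_sum, qSum_one hq hq1 p n]
    simp [qNum_zero]

end Aux

/-- The q-deformed variance of the q-binomial distribution equals `[n]_q p₀ (1 - p₀)`. -/
theorem q_binomial_variance (q : ℝ) (hq : 0 < q) (hq1 : q ≠ 1) (n : ℕ) (p₀ : ℝ) :
    (∑ κ ∈ Finset.range (n + 1),
        (qNum q κ) ^ 2 * qBinom q n κ * p₀ ^ κ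
          * ∏ i ∈ Finset.range (n - κ), (1 - p₀ * q ^ i))
      - (qNum q n * p₀) ^ 2 = qNum q n * p₀ * (1 - p₀) := by
  have hM2 : (∑ κ ∈ Finset.range (n + 1),
      (qNum q κ) ^ 2 * qBinom q n κ * p₀ ^ κ
        * ∏ i ∈ Finset.range (n - κ), (1 - p₀ * q ^ i))
      = qNum q n * p₀ * (1 + q * qNum q (n - 1) * p₀) := by
    cases n with
    | zero => simp [qNum_zero]
    | succ n =>
      rw [Finset.sum_range_succ' _ (n + 1)]
      have key : ∀ j ∈ Finset.range (n + 1),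
          (qNum q (j + 1)) ^ 2 * qBinom q (n + 1) (j + 1) * p₀ ^ (j + 1)
            * ∏ i ∈ Finset.range (n + 1 - (j + 1)), (1 - p₀ * q ^ i)
          = qNum q (n + 1) * p₀ *
              ((qBinom q n j * p₀ ^ j * ∏ i ∈ Finset.range (n - j), (1 - p₀ * q ^ i))
               + q * (qNum q j *
                  (qBinom q n j * p₀ ^ j * ∏ i ∈ Finset.range (n - j), (1 - p₀ * q ^ i)))) := by
        intro j hj
        simp only [Finset.mem_range] at hj
        obtain ⟨r, hr⟩ : ∃ r, n = j + r := ⟨n - j, by omega⟩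
        subst hr
        have h1 : j + r + 1 - (j + 1) = r := by omega
        have h2 : j + r - j = r := by omega
        rw [h1, h2]
        have habs := qAbsorb hq hq1 j r
        rw [show j + 1 + r = j + r + 1 by omega] at habs
        have hsplit : qNum q (j + 1) = 1 + q * qNum q j := by
          rw [show j + 1 = 1 + j by omega, qNum_add, qNum_one hq hq1, pow_one]
        calc (qNum q (j + 1)) ^ 2 * qBinom q (j + r + 1) (j + 1) * p₀ ^ (j + 1)
              * ∏ i ∈ Finset.range r, (1 - p₀ * q ^ i)
            = (1 + q * qNum q j) * ((qNum q (j + 1) * qBinom q (j + r + 1) (j + 1))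
                * p₀ ^ (j + 1) * ∏ i ∈ Finset.range r, (1 - p₀ * q ^ i)) := by
              rw [hsplit]; ring
          _ = _ := by rw [habs]; ring
      rw [Finset.sum_congr rfl key, ← Finset.mul_sum, Finset.sum_add_distrib,
        ← Finset.mul_sum, qSum_one hq hq1 p₀ n, qSum_mean hq hq1 p₀ n]
      simp only [qNum_zero, Nat.add_sub_cancel]
      ring
  rw [hM2]
  cases n with
  | zero => simp [qNum_zero]
  | succ n =>
    have hrec : qNum q (n + 1) = 1 + q * qNum q n := by
      rw [show n + 1 = 1 + n by omega, qNum_add, qNum_one hq hq1, pow_one]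
    simp only [Nat.add_sub_cancel]
    rw [hrec]; ring
end
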